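/- arXiv:1011.4961 — 3 statements merged into one kernel-verified Lean document; each statement's English description precedes it below -/
import Mathlib

section
/- A real symmetric 4×4 matrix S has its eigenvalue multiset invariant under negation if and only if trace(S) = 0 and trace(S³) = 0. -/
open Matrix

/-! The trace of `S ^ k` is the `k`-th power sum of the eigenvalues. A multiset invariant under
negation has vanishing odd power sums. Conversely, for four numbers with `a + b + c + d = 0` one has
`a³ + b³ + c³ + d³ = -3 (a + b) (a + c) (b + c)`, so a vanishing cube sum forces the numbers to
split into two pairs `{x, -x}`. -/

theorem Matrix.IsHermitian.trace_pow_eq_sum_eigenvalues_pow {𝕜 n : Type*} [RCLike 𝕜] [Fintype n]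
    [DecidableEq n] {A : Matrix n n 𝕜} (hA : A.IsHermitian) (k : ℕ) :
    (A ^ k).trace = ∑ i, (hA.eigenvalues i : 𝕜) ^ k := by
  conv_lhs => rw [hA.spectral_theorem, ← map_pow, Unitary.conjStarAlgAut_apply, trace_mul_cycle,
    Unitary.coe_star_mul_self, one_mul, diagonal_pow, trace_diagonal]
  simp

theorem sum_cubes_eq_of_add_add_add_eq_zero {R : Type*} [CommRing R] {a b c d : R}
    (h : a + b + c + d = 0) :
    a ^ 3 + b ^ 3 + c ^ 3 + d ^ 3 = -3 * ((a + b) * (a + c) * (b + c)) := by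
  obtain rfl : d = -(a + b + c) := by linear_combination h
  ring

namespace Multiset

variable {R : Type*} [CommRing R] [NoZeroDivisors R] [CharZero R]

theorem sum_map_pow_eq_zero_of_map_neg_eq_self {M : Multiset R} (hM : M.map Neg.neg = M) {k : ℕ}
    (hk : Odd k) : (M.map (· ^ k)).sum = 0 := by
  rw [← CharZero.neg_eq_self_iff]
  conv_rhs => rw [← hM]
  simp [map_map, hk.neg_pow, sum_map_neg]

theorem map_neg_eq_self_iff_of_card_eq_four {M : Multiset R} (hM : M.card = 4) :
    M.map Neg.neg = M ↔ M.sum = 0 ∧ (M.map (· ^ 3)).sum = 0 := by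
  refine ⟨fun h ↦ ⟨by simpa using sum_map_pow_eq_zero_of_map_neg_eq_self h odd_one,
    sum_map_pow_eq_zero_of_map_neg_eq_self h (by decide)⟩, ?_⟩
  obtain ⟨a, b, c, d, rfl⟩ := card_eq_four.1 hM
  simp only [insert_eq_cons, sum_cons, sum_singleton, map_cons, map_singleton, ← add_assoc]
  rintro ⟨h1, h3⟩
  have hpairs : (a + b) * (a + c) * (b + c) = 0 := by
    simpa [sum_cubes_eq_of_add_add_add_eq_zero h1] using h3
  obtain ⟨rfl, rfl⟩ | ⟨rfl, rfl⟩ | ⟨rfl, rfl⟩ :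
      (b = -a ∧ d = -c) ∨ (c = -a ∧ d = -b) ∨ (c = -b ∧ d = -a) := by
    rcases mul_eq_zero.1 hpairs with h | h
    · rcases mul_eq_zero.1 h with h | h
      · exact .inl ⟨by linear_combination h, by linear_combination h1 - h⟩
      · exact .inr (.inl ⟨by linear_combination h, by linear_combination h1 - h⟩)
    · exact .inr (.inr ⟨by linear_combination h, by linear_combination h1 - h⟩)
  all_goals
    simp only [← cons_zero, neg_neg]
    simp only [cons_swap]

end Multiset

/-- A real symmetric 4×4 matrix has negation-invariant eigenvalue multiset
iff trace S = 0 and trace S³ = 0. -/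
theorem stmt1 (S : Matrix (Fin 4) (Fin 4) ℝ) (hS : S.IsHermitian) :
    ((Finset.univ.val.map hS.eigenvalues).map (fun μ => -μ) =
      Finset.univ.val.map hS.eigenvalues) ↔
    (S.trace = 0 ∧ (S ^ 3).trace = 0) := by
  have htrace (k : ℕ) :
      (S ^ k).trace = ((Finset.univ.val.map hS.eigenvalues).map (· ^ k)).sum := by
    simp [hS.trace_pow_eq_sum_eigenvalues_pow, Finset.sum_eq_multiset_sum]
  rw [show S.trace = (S ^ 1).trace by rw [pow_one], htrace, htrace]
  simpa using Multiset.map_neg_eq_self_iff_of_card_eq_four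
    (M := Finset.univ.val.map hS.eigenvalues) (by simp)
end

section
/- Let V be a 2-dimensional subspace of the space of 2×2 real matrices on which the determinant vanishes identically (every element of V is singular). Then either all matrices in V have a common nonzero vector in their kernel, or all matrices in V have a common nonzero vector in the kernel of their transposes (equivalently, their images lie in a common line). -/
/-!
Take a basis `A, B` of `V` and nonzero vectors `c, d` with `Aᵀ c = 0`, `Bᵀ d = 0`. If `c` is a
multiple of `d`, it is a common cokernel vector. Otherwise `c, d` span the plane; a kernel vector `w`
of the singular matrix `A + B` gives `A w = -B w`, which is orthogonal to both `c` and `d`, hence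
zero, so `w` is a common kernel vector.
-/

open Matrix

theorem Matrix.eq_zero_of_linearIndependent_of_dotProduct_eq_zero {n K : Type*} [Fintype n]
    [DecidableEq n] [Field K] {c : n → n → K} (hc : LinearIndependent K c) {y : n → K}
    (hy : ∀ i, c i ⬝ᵥ y = 0) : y = 0 := by
  have hunit : IsUnit (Matrix.of c) := linearIndependent_rows_iff_isUnit.mp hc
  refine mulVec_injective_iff_isUnit.mpr hunit ?_
  rw [mulVec_zero]
  exact funext hy

theorem Submodule.exists_eq_span_pair_of_finrank_eq_two {K M : Type*} [Field K] [AddCommGroup M]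
    [Module K M] {V : Submodule K M} (hV : Module.finrank K V = 2) :
    ∃ A ∈ V, ∃ B ∈ V, V = span K {A, B} := by
  have : Module.Finite K V := Module.finite_of_finrank_eq_succ hV
  let b := Module.finBasisOfFinrankEq K V hV
  refine ⟨b 0, (b 0).2, b 1, (b 1).2, le_antisymm (fun x hx => ?_) ?_⟩
  · rw [mem_span_pair]
    have := congrArg V.subtype (b.sum_repr ⟨x, hx⟩)
    simp only [Fin.sum_univ_two, map_add, map_smul, subtype_apply] at this
    exact ⟨_, _, this⟩
  · simp [span_le, Set.insert_subset_iff]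

theorem Matrix.exists_mulVec_eq_zero_or_exists_transpose_mulVec_eq_zero {K : Type*} [Field K]
    {A B : Matrix (Fin 2) (Fin 2) K} (hA : A.det = 0) (hB : B.det = 0) (hAB : (A + B).det = 0) :
    (∃ v ≠ 0, A *ᵥ v = 0 ∧ B *ᵥ v = 0) ∨ (∃ v ≠ 0, Aᵀ *ᵥ v = 0 ∧ Bᵀ *ᵥ v = 0) := by
  obtain ⟨c, hc, hAc⟩ := exists_mulVec_eq_zero_iff.mpr ((det_transpose A).trans hA)
  obtain ⟨d, hd, hBd⟩ := exists_mulVec_eq_zero_iff.mpr ((det_transpose B).trans hB)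
  by_cases hcd : LinearIndependent K ![d, c]
  · left
    obtain ⟨w, hw, hABw⟩ := exists_mulVec_eq_zero_iff.mpr hAB
    have hBw : B *ᵥ w = -(A *ᵥ w) := by rw [eq_neg_iff_add_eq_zero, add_comm, ← add_mulVec, hABw]
    have hcAw : c ⬝ᵥ (A *ᵥ w) = 0 := by
      rw [dotProduct_mulVec, ← mulVec_transpose, hAc, zero_dotProduct]
    have hdAw : d ⬝ᵥ (A *ᵥ w) = 0 := by
      rw [← neg_eq_zero, ← dotProduct_neg, ← hBw, dotProduct_mulVec, ← mulVec_transpose, hBd,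
        zero_dotProduct]
    have hAw : A *ᵥ w = 0 := by
      refine eq_zero_of_linearIndependent_of_dotProduct_eq_zero hcd fun i => ?_
      fin_cases i
      exacts [hdAw, hcAw]
    exact ⟨w, hw, hAw, by rw [hBw, hAw, neg_zero]⟩
  · right
    obtain ⟨a, rfl⟩ : ∃ a : K, a • d = c := by
      simpa [LinearIndependent.pair_iff' hd] using hcd
    exact ⟨a • d, hc, hAc, by rw [mulVec_smul, hBd, smul_zero]⟩

/-- A 2-dimensional subspace of singular 2×2 real matrices has either a common
kernel vector or a common cokernel vector. -/
theorem stmt13 (V : Submodule ℝ (Matrix (Fin 2) (Fin 2) ℝ))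
    (hdim : Module.finrank ℝ V = 2)
    (hsing : ∀ B ∈ V, B.det = 0) :
    (∃ v : Fin 2 → ℝ, v ≠ 0 ∧ ∀ B ∈ V, B.mulVec v = 0) ∨
    (∃ v : Fin 2 → ℝ, v ≠ 0 ∧ ∀ B ∈ V, Bᵀ.mulVec v = 0) := by
  obtain ⟨A, hA, B, hB, rfl⟩ := Submodule.exists_eq_span_pair_of_finrank_eq_two hdim
  have hAB := exists_mulVec_eq_zero_or_exists_transpose_mulVec_eq_zero (hsing A hA) (hsing B hB)
    (hsing _ (add_mem hA hB))
  refine hAB.imp (fun ⟨v, hv, hAv, hBv⟩ => ⟨v, hv, fun C hC => ?_⟩)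
    (fun ⟨v, hv, hAv, hBv⟩ => ⟨v, hv, fun C hC => ?_⟩)
  all_goals
    obtain ⟨s, t, rfl⟩ := Submodule.mem_span_pair.mp hC
    simp [add_mulVec, smul_mulVec, hAv, hBv]
end

section
/- Let S be a 4×4 real symmetric matrix whose bilinear form vanishes on the 2-plane E spanned by v₁ = e₁ + a·e₃ and v₂ = e₂ + b·e₄ (a,b ∈ ℝ nonzero), i.e., vᵢᵀSvⱼ = 0 for i,j ∈ {1,2}. Then the space of such S lying in Q_C(λ₁,λ₂,λ₃) = {[[0,x₁,x₂,x₃],[x₁,0,λ₃x₃,λ₂x₂],[x₂,λ₃x₃,0,λ₁x₁],[x₃,λ₂x₂,λ₁x₁,0]] : x ∈ ℝ³} has dimension at most 2. -/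
open Matrix

/-- The general element of Bryant's Type C austere subspace, as a function
of the parameter vector x. -/
def SCmat (l1 l2 l3 : ℝ) (x : Fin 3 → ℝ) : Matrix (Fin 4) (Fin 4) ℝ :=
  !![0,   x 0,      x 1,      x 2;
     x 0, 0,        l3 * x 2, l2 * x 1;
     x 1, l3 * x 2, 0,        l1 * x 0;
     x 2, l2 * x 1, l1 * x 0, 0]

/-- SCmat as a linear map, so its range is the subspace Q_C. -/
def SCmap (l1 l2 l3 : ℝ) : (Fin 3 → ℝ) →ₗ[ℝ] Matrix (Fin 4) (Fin 4) ℝ where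
  toFun := SCmat l1 l2 l3
  map_add' x y := by
    ext i j
    fin_cases i <;> fin_cases j <;> simp [SCmat] <;> ring
  map_smul' c x := by
    ext i j
    fin_cases i <;> fin_cases j <;> simp [SCmat] <;> ring

/-- Evaluation of the bilinear form of a matrix at (v,w), as a linear map. -/
def phi (v w : Fin 4 → ℝ) : Matrix (Fin 4) (Fin 4) ℝ →ₗ[ℝ] ℝ where
  toFun S := v ⬝ᵥ S.mulVec w
  map_add' S T := by simp [Matrix.add_mulVec]
  map_smul' c S := by simp [Matrix.smul_mulVec]

/-! On `Q_C` the condition `v₁ᵀ S v₁ = 0` reads `2 a x₂ = 0`, so for `a ≠ 0` the parameter `x₂`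
vanishes and the subspace lies in the image of a coordinate plane of `ℝ³`. -/

theorem finrank_ker_proj_add_one {K ι : Type*} [Field K] [Fintype ι] (i : ι) :
    Module.finrank K (LinearMap.ker (LinearMap.proj i : (ι → K) →ₗ[K] K)) + 1 =
      Fintype.card ι := by
  rw [← Module.finrank_fintype_fun_eq_card K]
  refine Module.Dual.finrank_ker_add_one_of_ne_zero fun h => ?_
  classical
  simpa using LinearMap.congr_fun h (Pi.single i 1)

theorem phi_SCmat_self (l1 l2 l3 a : ℝ) (x : Fin 3 → ℝ) :
    phi ![1, 0, a, 0] ![1, 0, a, 0] (SCmat l1 l2 l3 x) = 2 * a * x 1 := by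
  simp only [phi, SCmat, LinearMap.coe_mk, AddHom.coe_mk, dotProduct, mulVec, Fin.sum_univ_four,
    Fin.isValue, of_apply, cons_val', cons_val_zero, cons_val_one, cons_val, cons_val_fin_one,
    mul_one, mul_zero, one_mul, zero_mul, add_zero, zero_add]
  ring

theorem range_SCmap_inf_ker_phi_le (l1 l2 l3 : ℝ) {a : ℝ} (ha : a ≠ 0) :
    LinearMap.range (SCmap l1 l2 l3) ⊓ LinearMap.ker (phi ![1, 0, a, 0] ![1, 0, a, 0]) ≤
      (LinearMap.ker (LinearMap.proj 1)).map (SCmap l1 l2 l3) := by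
  rintro _ ⟨⟨x, rfl⟩, hx⟩
  refine ⟨x, ?_, rfl⟩
  have hx1 : 2 * a * x 1 = 0 := phi_SCmat_self l1 l2 l3 a x ▸ hx
  simpa [ha] using hx1

theorem stmt19_general (l1 l2 l3 a b : ℝ) (ha : a ≠ 0) :
    Module.finrank ℝ
      ↥(LinearMap.range (SCmap l1 l2 l3)
        ⊓ LinearMap.ker (phi ![1,0,a,0] ![1,0,a,0])
        ⊓ LinearMap.ker (phi ![1,0,a,0] ![0,1,0,b])
        ⊓ LinearMap.ker (phi ![0,1,0,b] ![0,1,0,b])) ≤ 2 := by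
  have hker := finrank_ker_proj_add_one (K := ℝ) (1 : Fin 3)
  rw [Fintype.card_fin] at hker
  calc _ ≤ Module.finrank ℝ ((LinearMap.ker (LinearMap.proj 1)).map (SCmap l1 l2 l3)) :=
        Submodule.finrank_mono <| inf_le_left.trans <| inf_le_left.trans <|
          range_SCmap_inf_ker_phi_le l1 l2 l3 ha
    _ ≤ Module.finrank ℝ (LinearMap.ker (LinearMap.proj 1 : (Fin 3 → ℝ) →ₗ[ℝ] ℝ)) :=
        Submodule.finrank_map_le _ _
    _ = 2 := by omega

/-- The subspace of Q_C whose bilinear form vanishes on the plane spanned by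
v₁ = e₁ + a·e₃ and v₂ = e₂ + b·e₄ has dimension at most 2 when a,b ≠ 0. -/
theorem stmt19 (l1 l2 l3 a b : ℝ) (ha : a ≠ 0) (hb : b ≠ 0) :
    Module.finrank ℝ
      ↥(LinearMap.range (SCmap l1 l2 l3)
        ⊓ LinearMap.ker (phi ![1,0,a,0] ![1,0,a,0])
        ⊓ LinearMap.ker (phi ![1,0,a,0] ![0,1,0,b])
        ⊓ LinearMap.ker (phi ![0,1,0,b] ![0,1,0,b])) ≤ 2 :=
  stmt19_general l1 l2 l3 a b ha
end
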